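/- The set of solutions (p2, p3, p4, p5, p6, p10, p12, p41, p43, p45, p119) ∈ ℚ^11 with all coordinates nonzero of the system p41 = p10^3·p12, p43 = p10^2·p12^2, p45 = p10·p12^3, p119 = p41·p43·p10^2·p12^3, p119 = p10^12, p119 = p12^10, p119 = p2^60, p119 = p3^40, p119 = p4^30, p119 = p5^20, p119 = p6^20 forms, under componentwise multiplication, a group of order exactly 64 in which every element squares to the identity; hence it is isomorphic to (ℤ/2ℤ)^6. -/

import Mathlib

/-!
Write `a = p10` and `b = p12`. Substituting the first equations into the fourth gives
`p119 = a⁷ b⁶`, so `a⁵ = b⁶` and `a¹² = b¹⁰`; hence `b⁷² = a⁶⁰ = b⁵⁰`, i.e. `b²² = 1`.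
In an ordered ring the only units of finite order are `±1`, so `b = ±1`, then `a⁵ = 1` forces
`a = 1`, and all remaining coordinates are signs. The solutions are therefore exactly the tuples
with free signs at `p2, p3, p4, p5, p6, p12`, `p41 = p45 = p12` and `p10 = p43 = p119 = 1`.
-/

section OrderedRing

variable {R : Type*} [Ring R] [LinearOrder R] [IsStrictOrderedRing R]

theorem Units.pow_eq_one_iff_of_ne_zero {u : Rˣ} {n : ℕ} (hn : n ≠ 0) :
    u ^ n = 1 ↔ u = 1 ∨ u = -1 ∧ Even n := by
  simp only [Units.ext_iff, Units.val_pow_eq_pow_val, Units.val_one, Units.val_neg]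
  exact _root_.pow_eq_one_iff_of_ne_zero hn

theorem Units.eq_one_or_eq_neg_one_of_sq_eq_one {u : Rˣ} (h : u ^ 2 = 1) : u = 1 ∨ u = -1 := by
  rcases (Units.pow_eq_one_iff_of_ne_zero two_ne_zero).1 h with h | ⟨h, -⟩ <;> simp [h]

theorem Units.sq_eq_one_of_pow_eq_one {u : Rˣ} {n : ℕ} (hn : n ≠ 0) (h : u ^ n = 1) :
    u ^ 2 = 1 := by
  rcases (Units.pow_eq_one_iff_of_ne_zero hn).1 h with rfl | ⟨rfl, -⟩ <;> simp

theorem Units.eq_one_and_sq_eq_one_of_pow_eq {a b : Rˣ} (h₁ : a ^ 5 = b ^ 6)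
    (h₂ : a ^ 12 = b ^ 10) : a = 1 ∧ b ^ 2 = 1 := by
  have hb : b ^ 22 = 1 := mul_left_cancel <|
    calc b ^ 50 * b ^ 22 = (b ^ 6) ^ 12 := by rw [← pow_add, ← pow_mul]
      _ = (a ^ 12) ^ 5 := by rw [← h₁, ← pow_mul, ← pow_mul]
      _ = b ^ 50 * 1 := by rw [h₂, ← pow_mul, mul_one]
  have hb₂ : b ^ 2 = 1 := Units.sq_eq_one_of_pow_eq_one (by norm_num) hb
  have ha : a ^ 5 = 1 := by rw [h₁, show 6 = 2 * 3 from rfl, pow_mul, hb₂, one_pow]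
  rcases (Units.pow_eq_one_iff_of_ne_zero (by norm_num)).1 ha with ha | ⟨-, h5⟩
  · exact ⟨ha, hb₂⟩
  · exact absurd h5 (by decide)

end OrderedRing

section Signs

variable (R : Type*) [Ring R]

def negOnePowHom : Multiplicative (ZMod 2) →* Rˣ where
  toFun a := (-1) ^ a.toAdd.val
  map_one' := by simp
  map_mul' a b := by
    rw [toAdd_mul, ZMod.val_add, ← pow_add]
    ext
    push_cast
    exact (neg_one_pow_eq_pow_mod_two _).symm

variable {R}

theorem negOnePowHom_sq (a : Multiplicative (ZMod 2)) : negOnePowHom R a ^ 2 = 1 := by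
  rw [← map_pow, ← ofAdd_toAdd a, ← ofAdd_nsmul, two_nsmul, CharTwo.add_self_eq_zero, ofAdd_zero,
    map_one]

theorem negOnePowHom_ofAdd_one : negOnePowHom R (Multiplicative.ofAdd 1) = -1 :=
  pow_one _

theorem exists_negOnePowHom_eq {u : Rˣ} (hu : u = 1 ∨ u = -1) :
    ∃ a, negOnePowHom R a = u := by
  rcases hu with rfl | rfl
  · exact ⟨1, map_one _⟩
  · exact ⟨Multiplicative.ofAdd 1, negOnePowHom_ofAdd_one⟩

theorem negOnePowHom_injective (h : (-1 : Rˣ) ≠ 1) : Function.Injective (negOnePowHom R) := by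
  refine (injective_iff_map_eq_one _).2 fun a ha => ?_
  fin_cases a
  · rfl
  · exact absurd ha (negOnePowHom_ofAdd_one (R := R) ▸ h)

variable (R) in
def signParam : Multiplicative (Fin 6 → ZMod 2) →* (Fin 11 → Rˣ) :=
  MonoidHom.mk'
    (fun v =>
      let s j := negOnePowHom R (Multiplicative.ofAdd (v.toAdd j))
      ![s 0, s 1, s 2, s 3, s 4, 1, s 5, s 5, 1, s 5, 1])
    fun v w => by
      funext i
      fin_cases i <;> simp [← map_mul]

end Signs

section SignParam

variable {R : Type*} [Ring R] [LinearOrder R] [IsStrictOrderedRing R]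

theorem signParam_injective : Function.Injective (signParam R) := by
  refine (injective_iff_map_eq_one _).2 fun v hv => ?_
  have hs (j : Fin 6) : negOnePowHom R (Multiplicative.ofAdd (v.toAdd j)) = 1 := by
    fin_cases j
    exacts [congrFun hv 0, congrFun hv 1, congrFun hv 2, congrFun hv 3, congrFun hv 4,
      congrFun hv 6]
  exact Multiplicative.toAdd.injective <| funext fun j =>
    Multiplicative.ofAdd.injective <|
      negOnePowHom_injective (neg_units_ne_self 1) ((hs j).trans (map_one _).symm)

theorem mem_range_signParam {p : Fin 11 → Rˣ} :
    p ∈ (signParam R).range ↔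
      (∀ i, p i ^ 2 = 1) ∧ p 5 = 1 ∧ p 7 = p 6 ∧ p 8 = 1 ∧ p 9 = p 6 ∧ p 10 = 1 := by
  constructor
  · rintro ⟨v, rfl⟩
    refine ⟨fun i => ?_, rfl, rfl, rfl, rfl, rfl⟩
    fin_cases i <;> simp [signParam, negOnePowHom_sq]
  · rintro ⟨hsq, hp10, hp41, hp43, hp45, hp119⟩
    choose a ha using fun i =>
      exists_negOnePowHom_eq (Units.eq_one_or_eq_neg_one_of_sq_eq_one (hsq i))
    refine ⟨Multiplicative.ofAdd fun j => (a (![0, 1, 2, 3, 4, 6] j)).toAdd, ?_⟩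
    funext i
    fin_cases i <;> simp [signParam, ha, hp10, hp41, hp43, hp45, hp119]

end SignParam

def IsSolution {M : Type*} [Monoid M] (p : Fin 11 → M) : Prop :=
  p 7 = p 5 ^ 3 * p 6 ∧ p 8 = p 5 ^ 2 * p 6 ^ 2 ∧ p 9 = p 5 * p 6 ^ 3 ∧
    p 10 = p 7 * p 8 * p 5 ^ 2 * p 6 ^ 3 ∧ p 10 = p 5 ^ 12 ∧ p 10 = p 6 ^ 10 ∧
    p 10 = p 0 ^ 60 ∧ p 10 = p 1 ^ 40 ∧ p 10 = p 2 ^ 30 ∧ p 10 = p 3 ^ 20 ∧ p 10 = p 4 ^ 20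

section Solutions

variable {R : Type*} [CommRing R] [LinearOrder R] [IsStrictOrderedRing R]

theorem isSolution_iff {p : Fin 11 → Rˣ} :
    IsSolution p ↔
      (∀ i, p i ^ 2 = 1) ∧ p 5 = 1 ∧ p 7 = p 6 ∧ p 8 = 1 ∧ p 9 = p 6 ∧ p 10 = 1 := by
  constructor
  · rintro ⟨h41, h43, h45, h119, h10, h12, h2, h3, h4, h5, h6⟩
    have key : p 5 ^ 5 = p 6 ^ 6 := mul_left_cancel (a := p 5 ^ 7) <| by
      rw [← pow_add, ← h10, h119, h41, h43]
      ext
      push_cast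
      ring
    obtain ⟨hp10, hp12⟩ := Units.eq_one_and_sq_eq_one_of_pow_eq key (h10.symm.trans h12)
    have hp119 : p 10 = 1 := by rw [h10, hp10, one_pow]
    have hp41 : p 7 = p 6 := by rw [h41, hp10, one_pow, one_mul]
    have hp43 : p 8 = 1 := by rw [h43, hp10, one_pow, one_mul, hp12]
    have hp45 : p 9 = p 6 := by rw [h45, hp10, one_mul, pow_succ, hp12, one_mul]
    refine ⟨fun i => ?_, hp10, hp41, hp43, hp45, hp119⟩
    fin_cases i
    · exact Units.sq_eq_one_of_pow_eq_one (n := 60) (by norm_num) (h2 ▸ hp119)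
    · exact Units.sq_eq_one_of_pow_eq_one (n := 40) (by norm_num) (h3 ▸ hp119)
    · exact Units.sq_eq_one_of_pow_eq_one (n := 30) (by norm_num) (h4 ▸ hp119)
    · exact Units.sq_eq_one_of_pow_eq_one (n := 20) (by norm_num) (h5 ▸ hp119)
    · exact Units.sq_eq_one_of_pow_eq_one (n := 20) (by norm_num) (h6 ▸ hp119)
    all_goals simp [hp10, hp12, hp41, hp43, hp45, hp119]
  · rintro ⟨hsq, hp10, hp41, hp43, hp45, hp119⟩
    have hpow (i : Fin 11) (n : ℕ) : p i ^ n = p i ^ (n % 2) := pow_eq_pow_mod n (hsq i)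
    simp only [IsSolution, hp10, hp41, hp43, hp45, hp119, hpow 6 3, hpow 6 10, hpow 0 60,
      hpow 1 40, hpow 2 30, hpow 3 20, hpow 4 20]
    simp [← sq, hsq 6]

end Solutions

/-- Remark 3.3, algebra (ΛU₄, δ₄): nonzero solutions (tuples `Fin 11 → ℚˣ`,
coordinates `p 0 = p2`, `p 1 = p3`, `p 2 = p4`, `p 3 = p5`, `p 4 = p6`, `p 5 = p10`, `p 6 = p12`, `p 7 = p41`, `p 8 = p43`, `p 9 = p45`, `p 10 = p119`)
form a group of order 64 under componentwise multiplication in which every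
element squares to the identity; hence it is isomorphic to (ℤ/2ℤ)^6. -/
theorem stmt_9 :
    ∃ H : Subgroup (Fin 11 → ℚˣ),
      (H : Set (Fin 11 → ℚˣ)) =
        {p : Fin 11 → ℚˣ | p 7 = p 5 ^ 3 * p 6 ∧
        p 8 = p 5 ^ 2 * p 6 ^ 2 ∧
        p 9 = p 5 * p 6 ^ 3 ∧
        p 10 = p 7 * p 8 * p 5 ^ 2 * p 6 ^ 3 ∧
        p 10 = p 5 ^ 12 ∧
        p 10 = p 6 ^ 10 ∧
        p 10 = p 0 ^ 60 ∧
        p 10 = p 1 ^ 40 ∧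
        p 10 = p 2 ^ 30 ∧
        p 10 = p 3 ^ 20 ∧
        p 10 = p 4 ^ 20} ∧
      Nat.card H = 64 ∧
      (∀ x ∈ H, x * x = 1) ∧
      Nonempty (H ≃* Multiplicative (Fin 6 → ZMod 2)) := by
  let e := MonoidHom.ofInjective (signParam_injective (R := ℚ))
  refine ⟨(signParam ℚ).range, ?_, ?_, fun x hx => ?_, ⟨e.symm⟩⟩
  · ext p
    exact mem_range_signParam.trans isSolution_iff.symm
  · rw [← Nat.card_congr e.toEquiv]
    simp
  · funext i
    rw [Pi.mul_apply, ← sq, (mem_range_signParam.1 hx).1 i, Pi.one_apply]
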